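/- arXiv:1503.01354 — 2 statements merged into one kernel-verified Lean document; each statement's English description precedes it below -/
import Mathlib

section
/- Let V be a compact convex body in ℝ³ with boundary ∂V of mean curvature k₀, satisfying the Blaschke cap-body inequality Area(∂V)² ≥ 3 Vol(V) ∫_{∂V} (k₀/2) d(∂V). If a surface Σ isometric to ∂V has Brown-York mass m_BY(Σ,g) > (1/4π) · Area(Σ)² / (3 Vol(V)), then Σ is an averaged trapped surface (∫_Σ k dΣ < 0). -/
open MeasureTheory Real

/-- Sufficient condition for an ATS from the Blaschke cap-body inequality:
if `m_BY > (1/4π) Area² / (3 Vol)` then `∫ k < 0`. -/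
theorem ATS_of_brownYork_gt_blaschke {S : Type*} [MeasurableSpace S] (μ : Measure S)
    (k k₀ : S → ℝ) (hk : Integrable k μ) (hk₀ : Integrable k₀ μ)
    (A Vol : ℝ) (hA : A = (μ Set.univ).toReal) (hVol : 0 < Vol)
    (hBlaschke : A ^ 2 ≥ 3 * Vol * ∫ x, k₀ x / 2 ∂μ)
    (mBY : ℝ) (hm : mBY = (1 / (8 * π)) * ∫ x, (k₀ x - k x) ∂μ)
    (h : mBY > (1 / (4 * π)) * A ^ 2 / (3 * Vol)) :
    (∫ x, k x ∂μ) < 0 := by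
  have hpi := Real.pi_pos
  rw [integral_sub hk₀ hk] at hm
  rw [integral_div] at hBlaschke
  rw [hm] at h
  rw [gt_iff_lt, div_lt_iff₀ (by positivity)] at h
  have h2 := mul_lt_mul_of_pos_left h (by positivity : (0:ℝ) < 8 * π)
  have e1 : 8*π * (1/(4*π) * A^2) = 2 * A^2 := by
    field_simp; ring
  have e2 : 8*π * (1/(8*π) * ((∫ x, k₀ x ∂μ) - ∫ x, k x ∂μ) * (3*Vol))
      = ((∫ x, k₀ x ∂μ) - ∫ x, k x ∂μ) * (3*Vol) := by
    field_simp
  rw [e1, e2] at h2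
  nlinarith [mul_pos hVol hpi]
end

section
/- (Contrapositive sufficient condition for a pointwise trapped surface.) With notation as above, if m_BY(Σ,g) > (1/8π)∫_Σ n^σ[(n_σ k)_max − n_σ k] dΣ + (1/8π)∫_Σ k₀ dΣ, then k < 0 everywhere on Σ, i.e., Σ is a pointwise trapped surface. -/
open MeasureTheory Real

/-- Sufficient condition for a pointwise trapped surface: if
`m_BY > (1/8π)∫ n^σ[(n_σ k)_max − n_σ k] dΣ + (1/8π)∫ k₀ dΣ`,
then `k < 0` everywhere on `Σ`. -/
theorem pointwise_trapped_of_brownYork {S : Type*} [MeasurableSpace S] (μ : Measure S)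
    (k k₀ nσ : S → ℝ) (M mBY : ℝ)
    (hnσ : ∀ x, 0 < nσ x)
    (hM : IsGreatest (Set.range fun x => nσ x * k x) M)
    (hm : mBY = (1 / (8 * π)) * ∫ x, (k₀ x - k x) ∂μ)
    (hk : Integrable k μ) (hk₀ : Integrable k₀ μ)
    (hinv : Integrable (fun x => (nσ x)⁻¹) μ)
    (h : mBY > (1 / (8 * π)) * (∫ x, (nσ x)⁻¹ * (M - nσ x * k x) ∂μ)
          + (1 / (8 * π)) * ∫ x, k₀ x ∂μ) :
    ∀ x, k x < 0 := by
  have hπ : (0:ℝ) < 1 / (8 * π) := by positivity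
  have hsimp : (fun x => (nσ x)⁻¹ * (M - nσ x * k x))
      = fun x => M * (nσ x)⁻¹ - k x := by
    funext x
    have h0 : nσ x ≠ 0 := (hnσ x).ne'
    field_simp
  have hint : (∫ x, (nσ x)⁻¹ * (M - nσ x * k x) ∂μ)
      = M * (∫ x, (nσ x)⁻¹ ∂μ) - ∫ x, k x ∂μ := by
    rw [hsimp, integral_sub (hinv.const_mul M) hk, MeasureTheory.integral_const_mul]
  have hsub : (∫ x, (k₀ x - k x) ∂μ) = (∫ x, k₀ x ∂μ) - ∫ x, k x ∂μ :=
    integral_sub hk₀ hk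
  rw [hm, hsub, hint] at h
  have hMI : M * (∫ x, (nσ x)⁻¹ ∂μ) < 0 := by nlinarith
  have hI : 0 ≤ ∫ x, (nσ x)⁻¹ ∂μ :=
    integral_nonneg fun x => (inv_pos.mpr (hnσ x)).le
  have hMneg : M < 0 := by
    by_contra hc
    push_neg at hc
    nlinarith
  intro x
  have hle : nσ x * k x ≤ M := hM.2 ⟨x, rfl⟩
  have := hnσ x
  nlinarith
end
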